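/- arXiv:1410.3058 — 5 statements merged into one kernel-verified Lean document; each statement's English description precedes it below -/
import Mathlib

section
/- Let g : [0,∞) → [0,∞) be of class K∞ with inverse g⁻¹. Then for all a, b ≥ 0 and all ω > 0 it holds that a·b ≤ ω·a·g(a) + b·g⁻¹(b/ω). -/
/-! If `c ≤ g a` then `a c ≤ a g(a)`; otherwise monotonicity forces `a < g⁻¹(c)` and
`a c ≤ c g⁻¹(c)`. The weight `ω` enters by applying this with `c = b / ω` and scaling by `ω`. -/

theorem MonotoneOn.mul_le_mul_apply_add_mul_inv {α : Type*} [CommSemiring α] [LinearOrder α]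
    [IsOrderedRing α] {g ginv : α → α} (hg : MonotoneOn g (Set.Ici 0)) {a c : α}
    (ha : 0 ≤ a) (hc : 0 ≤ c) (hga : 0 ≤ g a) (hginv : 0 ≤ ginv c) (hright : g (ginv c) = c) :
    a * c ≤ a * g a + c * ginv c := by
  rcases le_or_gt c (g a) with hca | hac
  · exact le_add_of_le_of_nonneg (mul_le_mul_of_nonneg_left hca ha) (mul_nonneg hc hginv)
  · have ha_lt : a < ginv c := hg.reflect_lt ha hginv (hright.symm ▸ hac)
    refine le_add_of_nonneg_of_le (mul_nonneg ha hga) ?_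
    rw [mul_comm]
    exact mul_le_mul_of_nonneg_left ha_lt.le hc

theorem Kinf_inequality_general (g ginv : ℝ → ℝ)
    (hg_mono : StrictMonoOn g (Set.Ici 0))
    (hg_nonneg : ∀ s : ℝ, 0 ≤ s → 0 ≤ g s)
    (hinv_right : ∀ s : ℝ, 0 ≤ s → g (ginv s) = s)
    (hinv_nonneg : ∀ s : ℝ, 0 ≤ s → 0 ≤ ginv s) :
    ∀ a b : ℝ, 0 ≤ a → 0 ≤ b → ∀ ω : ℝ, 0 < ω →
      a * b ≤ ω * a * g a + b * ginv (b / ω) := by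
  intro a b ha hb ω hω
  have hc : 0 ≤ b / ω := div_nonneg hb hω.le
  have key := hg_mono.monotoneOn.mul_le_mul_apply_add_mul_inv ha hc (hg_nonneg a ha)
    (hinv_nonneg _ hc) (hinv_right _ hc)
  calc a * b = ω * (a * (b / ω)) := by field_simp
    _ ≤ ω * (a * g a + b / ω * ginv (b / ω)) := mul_le_mul_of_nonneg_left key hω.le
    _ = ω * a * g a + b * ginv (b / ω) := by field_simp

/-- The **K∞-inequality** (Proposition A.2 of the paper): if `g` is of class
`K∞` on `[0,∞)` (continuous, strictly increasing, unbounded, `g 0 = 0`) with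
inverse `ginv` on `[0,∞)`, then for all `a, b ≥ 0` and `ω > 0`,
`a·b ≤ ω·a·g(a) + b·ginv(b/ω)`. -/
theorem Kinf_inequality (g ginv : ℝ → ℝ)
    (hg_cont : ContinuousOn g (Set.Ici 0))
    (hg_mono : StrictMonoOn g (Set.Ici 0))
    (hg0 : g 0 = 0)
    (hg_unbdd : ∀ M : ℝ, ∃ s : ℝ, 0 ≤ s ∧ M ≤ g s)
    (hg_nonneg : ∀ s : ℝ, 0 ≤ s → 0 ≤ g s)
    (hinv_left : ∀ s : ℝ, 0 ≤ s → ginv (g s) = s)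
    (hinv_right : ∀ s : ℝ, 0 ≤ s → g (ginv s) = s)
    (hinv_nonneg : ∀ s : ℝ, 0 ≤ s → 0 ≤ ginv s) :
    ∀ a b : ℝ, 0 ≤ a → 0 ≤ b → ∀ ω : ℝ, 0 < ω →
      a * b ≤ ω * a * g a + b * ginv (b / ω) :=
  Kinf_inequality_general g ginv hg_mono hg_nonneg hinv_right hinv_nonneg
end

section
/- Let L > 0, c > 0, ε > 0, and ω be such that 0 < ω < 2ε and ω ≤ 2c. Let f : ℝ × ℝ → ℝ be continuous, η : [0,∞) → ℝ be continuous and convex, and define α̂(s) := (π²/L²)(c − ε)·s + L·η(s/L) for s ≥ 0. Let x : [0,L] → ℝ be twice continuously differentiable with x(0) = x(L) = 0, let u : [0,L] → ℝ be continuous, and assume ∫₀^L x''(l) · f(x(l), x'(l)) dl ≥ ∫₀^L η(x'(l)²) dl. Then, writing Z := ∫₀^L x'(l)² dl, it holds that −2∫₀^L x''(l) · ( c·x''(l) + f(x(l), x'(l)) + u(l) ) dl ≤ 2(ω/2 − ε)(π²/L²)·Z − 2·α̂(Z) + (1/ω)·∫₀^L u(l)² dl. -/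
open Real MeasureTheory intervalIntegral Set Filter Topology

/-!
Write `Z = ∫ x'²`. Young's inequality bounds the forcing term by `ω ∫ x''² + ω⁻¹ ∫ u²`, and the
hypothesis on `f` with Jensen's inequality for the convex `η` gives `∫ x'' f ≥ L η (Z / L)`. What
remains is `(ω - 2c) ∫ x''²`, which is at most `(ω - 2c) (π/L)² Z` because `ω ≤ 2c` and
`(π/L)² Z ≤ ∫ x''²`. The last inequality follows from `∫ x x'' = -Z`, `0 ≤ ∫ ((π/L)² x + x'')²`
and Wirtinger's inequality `(π/L)² ∫ x² ≤ Z`, which in turn comes from the cotangent trick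
for every `k < π / L`, the boundary terms vanishing because `x 0 = x L = 0`.
-/

section Wirtinger

variable {a b : ℝ} {x x' x'' : ℝ → ℝ}

theorem sq_mul_integral_sq_le_integral_sq_deriv_of_sin_pos (hab : a ≤ b)
    (hx : ContinuousOn x (Icc a b)) (hx' : ContinuousOn x' (Icc a b))
    (hd : ∀ l ∈ Ioo a b, HasDerivAt x (x' l) l) (ha : x a = 0) (hb : x b = 0) {k β : ℝ}
    (hsin : ∀ l ∈ Icc a b, 0 < sin (k * l + β)) :
    k ^ 2 * ∫ l in a..b, x l ^ 2 ≤ ∫ l in a..b, x' l ^ 2 := by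
  set cot : ℝ → ℝ := fun l ↦ cos (k * l + β) / sin (k * l + β)
  have hcot : ContinuousOn cot (Icc a b) :=
    ContinuousOn.div (by fun_prop) (by fun_prop) fun l hl ↦ (hsin l hl).ne'
  have hcot' : ∀ l ∈ Icc a b, HasDerivAt cot (-k * (1 + cot l ^ 2)) l := by
    intro l hl
    have hs := (hsin l hl).ne'
    have hlin : HasDerivAt (fun l ↦ k * l + β) k l := by
      simpa using ((hasDerivAt_id l).const_mul k).add_const β
    refine (hlin.cos.div hlin.sin hs).congr_deriv ?_
    simp only [cot]
    field_simp
    ring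
  -- `φ' = (k x² cot)'` differs from `x'² - k² x²` by the square `(x' - k x cot)²`
  set φ' : ℝ → ℝ := fun l ↦ 2 * k * x l * x' l * cot l - k ^ 2 * x l ^ 2 * (1 + cot l ^ 2)
  have hφ' : ∫ l in a..b, φ' l = 0 := by
    rw [integral_eq_sub_of_hasDerivAt_of_le hab (f := fun l ↦ k * x l ^ 2 * cot l)
      (by fun_prop) (fun l hl ↦ ?_)
      ((by fun_prop : ContinuousOn φ' _).intervalIntegrable_of_Icc hab)]
    · simp [ha, hb]
    · refine ((((hd l hl).pow 2).const_mul k).mul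
        (hcot' l (Ioo_subset_Icc_self hl))).congr_deriv ?_
      simp only [φ', Pi.pow_apply]
      ring
  have hle : ∀ l ∈ Icc a b, φ' l ≤ x' l ^ 2 - k ^ 2 * x l ^ 2 := fun l _ ↦ by
    nlinarith [sq_nonneg (x' l - k * x l * cot l)]
  have hint : ∀ g : ℝ → ℝ, ContinuousOn g (Icc a b) → IntervalIntegrable g volume a b :=
    fun g hg ↦ hg.intervalIntegrable_of_Icc hab
  have hmono := integral_mono_on hab (hint φ' (by fun_prop)) (hint _ (by fun_prop)) hle
  rw [hφ', integral_sub (hint _ (by fun_prop)) (hint _ (by fun_prop)),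
    intervalIntegral.integral_const_mul] at hmono
  linarith

theorem wirtinger_inequality (hab : a < b)
    (hx : ContinuousOn x (Icc a b)) (hx' : ContinuousOn x' (Icc a b))
    (hd : ∀ l ∈ Ioo a b, HasDerivAt x (x' l) l) (ha : x a = 0) (hb : x b = 0) :
    (π / (b - a)) ^ 2 * ∫ l in a..b, x l ^ 2 ≤ ∫ l in a..b, x' l ^ 2 := by
  have hba : 0 < b - a := sub_pos.2 hab
  -- for `θ < 1`, the phase-shifted `sin (θ π (l - a) / (b - a) + (1 - θ) π / 2)` stays positive
  -- on `[a, b]`, and letting `θ → 1` recovers the sharp constant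
  have hθ : ∀ θ ∈ Ioo (0 : ℝ) 1, (θ * (π / (b - a))) ^ 2 * ∫ l in a..b, x l ^ 2 ≤
      ∫ l in a..b, x' l ^ 2 := by
    rintro θ ⟨hθ0, hθ1⟩
    refine sq_mul_integral_sq_le_integral_sq_deriv_of_sin_pos hab.le hx hx' hd ha hb
      (β := (1 - θ) * (π / 2) - θ * (π / (b - a)) * a)
      fun l hl ↦ sin_pos_of_pos_of_lt_pi ?_ ?_
    all_goals
      have ht : θ * (π / (b - a)) * l + ((1 - θ) * (π / 2) - θ * (π / (b - a)) * a) =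
          θ * π * ((l - a) / (b - a)) + (1 - θ) * (π / 2) := by field_simp; ring
      have ht0 : 0 ≤ (l - a) / (b - a) := div_nonneg (by linarith [hl.1]) hba.le
      have ht1 : (l - a) / (b - a) ≤ 1 := (div_le_one hba).2 (by linarith [hl.2])
      rw [ht]
      nlinarith [pi_pos, mul_pos hθ0 pi_pos]
  have hcont : Continuous fun θ : ℝ ↦ (θ * (π / (b - a))) ^ 2 * ∫ l in a..b, x l ^ 2 := by
    fun_prop
  simpa using le_of_tendsto (hcont.tendsto 1 |>.mono_left nhdsWithin_le_nhds)
    (eventually_of_mem (Ioo_mem_nhdsLT zero_lt_one) hθ)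

theorem wirtinger_inequality_deriv (hab : a < b) (hx : ContinuousOn x (Icc a b))
    (hx' : ContinuousOn x' (Icc a b)) (hx'' : ContinuousOn x'' (Icc a b))
    (hd : ∀ l ∈ Ioo a b, HasDerivAt x (x' l) l) (hd' : ∀ l ∈ Ioo a b, HasDerivAt x' (x'' l) l)
    (ha : x a = 0) (hb : x b = 0) :
    (π / (b - a)) ^ 2 * ∫ l in a..b, x' l ^ 2 ≤ ∫ l in a..b, x'' l ^ 2 := by
  set K := (π / (b - a)) ^ 2
  have hint : ∀ g : ℝ → ℝ, ContinuousOn g (Icc a b) → IntervalIntegrable g volume a b :=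
    fun g hg ↦ hg.intervalIntegrable_of_Icc hab.le
  have hparts : ∫ l in a..b, x l * x'' l = -∫ l in a..b, x' l ^ 2 := by
    rw [integral_mul_deriv_eq_deriv_mul_of_hasDerivAt (u := x) (v := x') (u' := x') (v' := x'')
      (by rwa [uIcc_of_le hab.le]) (by rwa [uIcc_of_le hab.le]) (by simpa [hab.le] using hd)
      (by simpa [hab.le] using hd') (hint _ hx') (hint _ hx'')]
    simp [ha, hb, sq]
  have hsq : 0 ≤ K ^ 2 * (∫ l in a..b, x l ^ 2) + 2 * K * (∫ l in a..b, x l * x'' l) +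
      ∫ l in a..b, x'' l ^ 2 := by
    have h0 : 0 ≤ ∫ l in a..b, (K * x l + x'' l) ^ 2 :=
      integral_nonneg hab.le fun l _ ↦ sq_nonneg _
    have hexp : (fun l ↦ (K * x l + x'' l) ^ 2) =
        fun l ↦ K ^ 2 * x l ^ 2 + (2 * K * (x l * x'' l) + x'' l ^ 2) := by
      ext l; ring
    rwa [hexp, integral_add (hint _ (by fun_prop)) (hint _ (by fun_prop)),
      integral_add (hint _ (by fun_prop)) (hint _ (by fun_prop)),
      intervalIntegral.integral_const_mul, intervalIntegral.integral_const_mul,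
      ← add_assoc] at h0
  have hw := mul_le_mul_of_nonneg_left (wirtinger_inequality hab hx hx' hd ha hb)
    (sq_nonneg (π / (b - a)))
  rw [hparts] at hsq
  nlinarith

end Wirtinger

theorem neg_two_mul_integral_mul_le_young {a b ω : ℝ} {g v : ℝ → ℝ} (hab : a ≤ b) (hω : 0 < ω)
    (hg : ContinuousOn g (Icc a b)) (hv : ContinuousOn v (Icc a b)) :
    -2 * ∫ l in a..b, g l * v l ≤
      ω * (∫ l in a..b, g l ^ 2) + 1 / ω * ∫ l in a..b, v l ^ 2 := by
  have hint : ∀ h : ℝ → ℝ, ContinuousOn h (Icc a b) → IntervalIntegrable h volume a b :=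
    fun h hh ↦ hh.intervalIntegrable_of_Icc hab
  have hpt : ∀ l ∈ Icc a b, -2 * (g l * v l) ≤ ω * g l ^ 2 + 1 / ω * v l ^ 2 := fun l _ ↦ by
    rw [← sub_nonneg]
    have : ω * g l ^ 2 + 1 / ω * v l ^ 2 - -2 * (g l * v l) = (ω * g l + v l) ^ 2 / ω := by
      field_simp; ring
    rw [this]; positivity
  have hmono := integral_mono_on hab (hint _ (by fun_prop)) (hint _ (by fun_prop)) hpt
  rwa [integral_add (hint _ (by fun_prop)) (hint _ (by fun_prop)),
    intervalIntegral.integral_const_mul, intervalIntegral.integral_const_mul,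
    intervalIntegral.integral_const_mul] at hmono

theorem ConvexOn.map_interval_average_le {a b : ℝ} {s : Set ℝ} {η g : ℝ → ℝ} (hab : a < b)
    (hη : ConvexOn ℝ s η) (hηc : ContinuousOn η s) (hs : IsClosed s)
    (hg : ContinuousOn g (Icc a b)) (hgs : MapsTo g (Icc a b) s) :
    η (⨍ l in a..b, g l) ≤ ⨍ l in a..b, η (g l) := by
  rw [uIoc_of_le hab.le]
  refine hη.map_set_average_le hηc hs (by simp [hab]) (by simp)
    ((ae_restrict_mem measurableSet_Ioc).mono fun l hl ↦ hgs (Ioc_subset_Icc_self hl))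
    (hg.integrableOn_Icc.mono_set Ioc_subset_Icc_self)
    ((hηc.comp hg hgs).integrableOn_Icc.mono_set Ioc_subset_Icc_self)

theorem ContDiffOn.hasDerivAt_derivWithin_Icc {f : ℝ → ℝ} {a b l : ℝ} {n : WithTop ℕ∞}
    (hf : ContDiffOn ℝ n f (Icc a b)) (hn : n ≠ 0) (hl : l ∈ Ioo a b) :
    HasDerivAt f (derivWithin f (Icc a b) l) l := by
  have hmem : Icc a b ∈ 𝓝 l := Icc_mem_nhds hl.1 hl.2
  rw [derivWithin_of_mem_nhds hmem]
  exact ((hf.differentiableOn hn).differentiableAt hmem).hasDerivAt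

theorem ContDiffOn.exists_deriv_deriv_Icc {x : ℝ → ℝ} {a b : ℝ} (hab : a < b)
    (hx : ContDiffOn ℝ 2 x (Icc a b)) :
    ∃ x' x'' : ℝ → ℝ, ContinuousOn x' (Icc a b) ∧ ContinuousOn x'' (Icc a b) ∧
      (∀ l ∈ Ioo a b, HasDerivAt x (x' l) l) ∧ (∀ l ∈ Ioo a b, HasDerivAt x' (x'' l) l) ∧
      EqOn (deriv x) x' (Ioo a b) ∧ EqOn (deriv (deriv x)) x'' (Ioo a b) := by
  have hx' : ContDiffOn ℝ 1 (derivWithin x (Icc a b)) (Icc a b) :=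
    hx.derivWithin (uniqueDiffOn_Icc hab) (by norm_num)
  have hdx : ∀ l ∈ Ioo a b, HasDerivAt x (derivWithin x (Icc a b) l) l :=
    fun l ↦ hx.hasDerivAt_derivWithin_Icc (by norm_num)
  have hdx' : ∀ l ∈ Ioo a b, HasDerivAt (derivWithin x (Icc a b))
      (derivWithin (derivWithin x (Icc a b)) (Icc a b) l) l :=
    fun l ↦ hx'.hasDerivAt_derivWithin_Icc one_ne_zero
  have heq : EqOn (deriv x) (derivWithin x (Icc a b)) (Ioo a b) :=
    deriv_eqOn isOpen_Ioo fun l hl ↦ (hdx l hl).hasDerivWithinAt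
  exact ⟨_, _, hx'.continuousOn, hx'.continuousOn_derivWithin (uniqueDiffOn_Icc hab) le_rfl,
    hdx, hdx', heq,
    (heq.deriv isOpen_Ioo).trans (deriv_eqOn isOpen_Ioo fun l hl ↦ (hdx' l hl).hasDerivWithinAt)⟩

theorem dissipation_estimate_23_general (L c ε ω : ℝ) (hL : 0 < L)
    (hω : 0 < ω) (hωc : ω ≤ 2 * c)
    (f : ℝ × ℝ → ℝ) (hf : Continuous f)
    (η : ℝ → ℝ) (hη : ContinuousOn η (Set.Ici 0))
    (hηconv : ConvexOn ℝ (Set.Ici 0) η)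
    (αhat : ℝ → ℝ)
    (hαhat : ∀ s : ℝ, 0 ≤ s → αhat s = Real.pi ^ 2 / L ^ 2 * (c - ε) * s + L * η (s / L))
    (x : ℝ → ℝ) (hx : ContDiffOn ℝ 2 x (Set.Icc 0 L))
    (hx0 : x 0 = 0) (hxL : x L = 0)
    (u : ℝ → ℝ) (hu : ContinuousOn u (Set.Icc 0 L))
    (hyp : ∫ l in (0:ℝ)..L, deriv (deriv x) l * f (x l, deriv x l)
            ≥ ∫ l in (0:ℝ)..L, η ((deriv x l) ^ 2)) :
    -2 * ∫ l in (0:ℝ)..L, deriv (deriv x) l *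
        (c * deriv (deriv x) l + f (x l, deriv x l) + u l)
      ≤ 2 * (ω/2 - ε) * (Real.pi ^ 2 / L ^ 2) * (∫ l in (0:ℝ)..L, (deriv x l) ^ 2)
        - 2 * αhat (∫ l in (0:ℝ)..L, (deriv x l) ^ 2)
        + (1/ω) * ∫ l in (0:ℝ)..L, (u l) ^ 2 := by
  obtain ⟨G, H, hGc, hHc, hdx, hdG, hx', hx''⟩ := hx.exists_deriv_deriv_Icc hL
  -- `deriv` ignores the one-sided derivatives at `0` and `L`, but the integrals only see `Ioo 0 L`
  have hcongr (F : ℝ → ℝ → ℝ → ℝ) : ∫ l in (0:ℝ)..L, F l (deriv x l) (deriv (deriv x) l) =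
      ∫ l in (0:ℝ)..L, F l (G l) (H l) :=
    integral_congr_Ioo_of_le hL.le fun l hl ↦ by simp only [hx' hl, hx'' hl]
  have h1 := hcongr fun l p q ↦ q * (c * q + f (x l, p) + u l)
  have h2 := hcongr fun _ p _ ↦ p ^ 2
  have h3 := hcongr fun l p q ↦ q * f (x l, p)
  have h4 := hcongr fun _ p _ ↦ η (p ^ 2)
  beta_reduce at h1 h2 h3 h4
  rw [h1, h2, hαhat _ (integral_nonneg hL.le fun l _ ↦ sq_nonneg (G l))]
  rw [h3, h4] at hyp
  have hwirtinger : π ^ 2 / L ^ 2 * (∫ l in (0:ℝ)..L, G l ^ 2) ≤ ∫ l in (0:ℝ)..L, H l ^ 2 := by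
    simpa [div_pow] using wirtinger_inequality_deriv hL hx.continuousOn hGc hHc hdx hdG hx0 hxL
  have hyoung := neg_two_mul_integral_mul_le_young hL.le hω hHc hu
  have hjensen := hηconv.map_interval_average_le (g := fun l ↦ G l ^ 2) hL hη isClosed_Ici
    (hGc.pow 2) fun l _ ↦ sq_nonneg (G l)
  rw [interval_average_eq_div, interval_average_eq_div, sub_zero, le_div_iff₀ hL] at hjensen
  have hsplit : ∫ l in (0:ℝ)..L, H l * (c * H l + f (x l, G l) + u l) =
      c * (∫ l in (0:ℝ)..L, H l ^ 2) + (∫ l in (0:ℝ)..L, H l * f (x l, G l)) +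
        ∫ l in (0:ℝ)..L, H l * u l := by
    have hxc := hx.continuousOn
    have hexp : (fun l ↦ H l * (c * H l + f (x l, G l) + u l)) =
        fun l ↦ c * H l ^ 2 + H l * f (x l, G l) + H l * u l := by
      ext l; ring
    rw [hexp, intervalIntegral.integral_add, intervalIntegral.integral_add,
      intervalIntegral.integral_const_mul]
    all_goals exact (by fun_prop : ContinuousOn _ _).intervalIntegrable_of_Icc hL.le
  rw [hsplit]
  linarith [mul_le_mul_of_nonneg_left hwirtinger (by linarith : 0 ≤ 2 * c - ω)]

/-- Core dissipation estimate (23) in the proof of Item 1 of Theorem 3.1 of the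
paper for `q = 1`.  Here `α̂(s) = (π²/L²)(c−ε)s + L·η(s/L)` and
`Z = ∫₀^L (x')² dl`. -/
theorem dissipation_estimate_23 (L c ε ω : ℝ) (hL : 0 < L) (hc : 0 < c) (hε : 0 < ε)
    (hω : 0 < ω) (hωε : ω < 2 * ε) (hωc : ω ≤ 2 * c)
    (f : ℝ × ℝ → ℝ) (hf : Continuous f)
    (η : ℝ → ℝ) (hη : ContinuousOn η (Set.Ici 0))
    (hηconv : ConvexOn ℝ (Set.Ici 0) η)
    (αhat : ℝ → ℝ)
    (hαhat : ∀ s : ℝ, 0 ≤ s → αhat s = Real.pi ^ 2 / L ^ 2 * (c - ε) * s + L * η (s / L))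
    (x : ℝ → ℝ) (hx : ContDiffOn ℝ 2 x (Set.Icc 0 L))
    (hx0 : x 0 = 0) (hxL : x L = 0)
    (u : ℝ → ℝ) (hu : ContinuousOn u (Set.Icc 0 L))
    (hyp : ∫ l in (0:ℝ)..L, deriv (deriv x) l * f (x l, deriv x l)
            ≥ ∫ l in (0:ℝ)..L, η ((deriv x l) ^ 2)) :
    -2 * ∫ l in (0:ℝ)..L, deriv (deriv x) l *
        (c * deriv (deriv x) l + f (x l, deriv x l) + u l)
      ≤ 2 * (ω/2 - ε) * (Real.pi ^ 2 / L ^ 2) * (∫ l in (0:ℝ)..L, (deriv x l) ^ 2)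
        - 2 * αhat (∫ l in (0:ℝ)..L, (deriv x l) ^ 2)
        + (1/ω) * ∫ l in (0:ℝ)..L, (u l) ^ 2 :=
  dissipation_estimate_23_general L c ε ω hL hω hωc f hf η hη hηconv αhat hαhat x hx hx0 hxL u hu
    hyp
end

section
/- Let b > 0 and a ∈ ℝ. Let x : [0,π] → ℝ be twice continuously differentiable with x(0) = x(π) = 0, and let u : [0,π] → ℝ be continuously differentiable with u(0) = u(π) = 0. Then, writing Z := ∫₀^π x'(l)² dl, it holds that −2∫₀^π x''(l) · ( x''(l) + a·x(l) − b·x(l)·x'(l)² + u(l) ) dl ≤ −2(1 − a)·Z − (b/(3π))·Z² + 2·(6/b)^{1/3}·∫₀^π |u'(l)|^{4/3} dl. -/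
open Real MeasureTheory intervalIntegral

/-!
Integrating by parts, the left-hand side equals
`-2∫x''² + 2a∫x'² - (2b/3)∫x'⁴ + 2∫x'u'`. Young's inequality with exponents `4` and `4/3`
absorbs `2∫x'u'` into half of the quartic term, `(∫x'²)² ≤ π∫x'⁴` is Cauchy–Schwarz, and
`∫x'² ≤ ∫x''²` follows from `∫x'² = -∫x x'' ≤ (∫x² + ∫x''²)/2` and Wirtinger's inequality
`∫x² ≤ ∫x'²`. For Wirtinger's inequality, `h = c tan(c(t - π/2))` solves `h' = c² + h²` and is
smooth on `[0, π]` when `c < 1`; integrating `(x²h)' = (x' + xh)² - x'² + c²x²` gives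
`c²∫x² ≤ ∫x'²`, and then `c → 1`.
-/

open Set Filter Topology
open scoped Interval

theorem mul_pow_three_le_pow_four_add_pow_four {σ τ : ℝ} (hσ : 0 ≤ σ) (hτ : 0 ≤ τ) :
    σ * τ ^ 3 ≤ σ ^ 4 + τ ^ 4 := by
  rcases le_total σ τ with h | h
  · nlinarith [mul_le_mul_of_nonneg_right h (pow_nonneg hτ 3), pow_nonneg hσ 4]
  · nlinarith [mul_le_mul_of_nonneg_left (pow_le_pow_left₀ hτ h 3) hσ, pow_nonneg hτ 4]

theorem mul_le_pow_four_div_add_mul_rpow {K : ℝ} (hK : 0 < K) (s r : ℝ) :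
    s * r ≤ s ^ 4 / K ^ 3 + K * |r| ^ ((4 : ℝ) / 3) := by
  set t := |r| ^ ((1 : ℝ) / 3)
  have ht3 : t ^ 3 = |r| := by
    rw [← rpow_natCast, ← rpow_mul (abs_nonneg r)]; norm_num
  have ht4 : |r| ^ ((4 : ℝ) / 3) = t ^ 4 := by
    rw [← rpow_natCast, ← rpow_mul (abs_nonneg r)]; norm_num
  have key := mul_pow_three_le_pow_four_add_pow_four (div_nonneg (abs_nonneg s) hK.le)
    (by positivity : 0 ≤ t)
  calc s * r ≤ |s| * t ^ 3 := by rw [ht3, ← abs_mul]; exact le_abs_self _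
    _ = K * (|s| / K * t ^ 3) := by field_simp
    _ ≤ K * ((|s| / K) ^ 4 + t ^ 4) := by gcongr
    _ = s ^ 4 / K ^ 3 + K * |r| ^ ((4 : ℝ) / 3) := by
      rw [ht4, div_pow, pow_abs, abs_of_nonneg (by positivity)]; field_simp

theorem hasDerivAt_mul_tan_mul_sub (c s t : ℝ) (ht : cos (c * (t - s)) ≠ 0) :
    HasDerivAt (fun t => c * tan (c * (t - s))) (c ^ 2 + (c * tan (c * (t - s))) ^ 2) t := by
  refine (((hasDerivAt_tan ht).comp t
    (((hasDerivAt_id t).sub_const s).const_mul c)).const_mul c).congr_deriv ?_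
  rw [tan_eq_sin_div_cos]
  field_simp
  rw [cos_sq_add_sin_sq, mul_one]

section Interval

variable {a b : ℝ}

theorem sq_integral_le_mul_integral_sq (hab : a ≤ b) {f : ℝ → ℝ}
    (hf : ContinuousOn f [[a, b]]) :
    (∫ t in a..b, f t) ^ 2 ≤ (b - a) * ∫ t in a..b, f t ^ 2 := by
  have hf1 : IntervalIntegrable f volume a b := hf.intervalIntegrable
  have hf2 : IntervalIntegrable (fun t => f t ^ 2) volume a b := (hf.pow 2).intervalIntegrable
  have hquad : ∀ c : ℝ,
      0 ≤ (b - a) * (c * c) + (-2 * ∫ t in a..b, f t) * c + ∫ t in a..b, f t ^ 2 := by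
    intro c
    have : 0 ≤ ∫ t in a..b, (f t - c) ^ 2 := integral_nonneg hab fun t _ => sq_nonneg _
    convert this using 1
    simp_rw [sub_sq]
    rw [intervalIntegral.integral_add (hf2.sub ((hf1.const_mul 2).mul_const c))
        intervalIntegrable_const,
      intervalIntegral.integral_sub hf2 ((hf1.const_mul 2).mul_const c),
      intervalIntegral.integral_mul_const, intervalIntegral.integral_const_mul,
      intervalIntegral.integral_const, smul_eq_mul]
    ring
  have := discrim_le_zero hquad
  rw [discrim] at this
  linarith

theorem integral_mul_le_integral_pow_four_div_add_mul_integral_rpow (hab : a ≤ b) {K : ℝ}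
    (hK : 0 < K) {f g : ℝ → ℝ} (hf : ContinuousOn f [[a, b]]) (hg : ContinuousOn g [[a, b]]) :
    ∫ t in a..b, f t * g t
      ≤ (∫ t in a..b, f t ^ 4) / K ^ 3 + K * ∫ t in a..b, |g t| ^ ((4 : ℝ) / 3) := by
  have hg43 : ContinuousOn (fun t => |g t| ^ ((4 : ℝ) / 3)) [[a, b]] :=
    hg.abs.rpow_const fun _ _ => Or.inr (by norm_num)
  rw [← intervalIntegral.integral_div, ← intervalIntegral.integral_const_mul,
    ← intervalIntegral.integral_add]
  · exact integral_mono_on hab (ContinuousOn.intervalIntegrable (by fun_prop))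
      (ContinuousOn.intervalIntegrable (by fun_prop)) fun t _ =>
        mul_le_pow_four_div_add_mul_rpow hK (f t) (g t)
  all_goals exact ContinuousOn.intervalIntegrable (by fun_prop)

variable {x x' x'' : ℝ → ℝ}

theorem mul_integral_sq_le_integral_sq_deriv_of_riccati (hab : a ≤ b) {k : ℝ} {h : ℝ → ℝ}
    (hx : ∀ t ∈ [[a, b]], HasDerivWithinAt x (x' t) [[a, b]] t)
    (hx' : ContinuousOn x' [[a, b]])
    (hh : ∀ t ∈ [[a, b]], HasDerivWithinAt h (k + h t ^ 2) [[a, b]] t)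
    (hxa : x a = 0) (hxb : x b = 0) :
    k * ∫ t in a..b, x t ^ 2 ≤ ∫ t in a..b, x' t ^ 2 := by
  have hxc : ContinuousOn x [[a, b]] := fun t ht => (hx t ht).continuousWithinAt
  have hhc : ContinuousOn h [[a, b]] := fun t ht => (hh t ht).continuousWithinAt
  have hx2 : ∀ t ∈ [[a, b]], HasDerivWithinAt (fun t => x t ^ 2) (2 * x t * x' t) [[a, b]] t :=
    fun t ht => by simpa using (hx t ht).fun_pow 2
  have hboundary : ∫ t in a..b, 2 * x t * x' t * h t + x t ^ 2 * (k + h t ^ 2) = 0 := by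
    rw [integral_deriv_mul_eq_sub_of_hasDerivWithinAt hx2 hh
      (ContinuousOn.intervalIntegrable (by fun_prop))
      (ContinuousOn.intervalIntegrable (by fun_prop))]
    simp [hxa, hxb]
  have hsq : 0 ≤ ∫ t in a..b, (x' t + x t * h t) ^ 2 :=
    integral_nonneg hab fun t _ => sq_nonneg _
  have hdiff : ∫ t in a..b, x' t ^ 2 - k * x t ^ 2
      = (∫ t in a..b, (x' t + x t * h t) ^ 2)
        - ∫ t in a..b, 2 * x t * x' t * h t + x t ^ 2 * (k + h t ^ 2) := by
    rw [← intervalIntegral.integral_sub (ContinuousOn.intervalIntegrable (by fun_prop))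
      (ContinuousOn.intervalIntegrable (by fun_prop))]
    congr 1 with t
    ring
  rw [intervalIntegral.integral_sub (ContinuousOn.intervalIntegrable (by fun_prop))
      (ContinuousOn.intervalIntegrable (by fun_prop)),
    intervalIntegral.integral_const_mul] at hdiff
  linarith

theorem integral_mul_deriv_deriv_eq_neg
    (hx : ∀ t ∈ [[a, b]], HasDerivWithinAt x (x' t) [[a, b]] t)
    (hx' : ∀ t ∈ [[a, b]], HasDerivWithinAt x' (x'' t) [[a, b]] t)
    (hx'' : ContinuousOn x'' [[a, b]]) (hxa : x a = 0) (hxb : x b = 0) :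
    ∫ t in a..b, x t * x'' t = -∫ t in a..b, x' t ^ 2 := by
  have hx'c : ContinuousOn x' [[a, b]] := fun t ht => (hx' t ht).continuousWithinAt
  rw [integral_mul_deriv_eq_deriv_mul_of_hasDerivWithinAt hx hx' hx'c.intervalIntegrable
    hx''.intervalIntegrable, hxa, hxb]
  simp [sq]

theorem integral_mul_sq_deriv_mul_deriv_deriv_eq_neg
    (hx : ∀ t ∈ [[a, b]], HasDerivWithinAt x (x' t) [[a, b]] t)
    (hx' : ∀ t ∈ [[a, b]], HasDerivWithinAt x' (x'' t) [[a, b]] t)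
    (hx'' : ContinuousOn x'' [[a, b]]) (hxa : x a = 0) (hxb : x b = 0) :
    ∫ t in a..b, x t * x' t ^ 2 * x'' t = -(1 / 3) * ∫ t in a..b, x' t ^ 4 := by
  have hx'c : ContinuousOn x' [[a, b]] := fun t ht => (hx' t ht).continuousWithinAt
  have hcube : ∀ t ∈ [[a, b]],
      HasDerivWithinAt (fun t => x' t ^ 3 / 3) (x' t ^ 2 * x'' t) [[a, b]] t :=
    fun t ht => (((hx' t ht).fun_pow 3).div_const 3).congr_deriv (by push_cast; ring)
  simp_rw [mul_assoc]
  rw [integral_mul_deriv_eq_deriv_mul_of_hasDerivWithinAt hx hcube hx'c.intervalIntegrable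
    (ContinuousOn.intervalIntegrable (by fun_prop)), hxa, hxb,
    ← intervalIntegral.integral_const_mul]
  simp only [zero_mul, sub_self, zero_sub, ← intervalIntegral.integral_neg]
  congr 1 with t
  ring

theorem integral_deriv_deriv_mul_eq_neg {u u' : ℝ → ℝ}
    (hx' : ∀ t ∈ [[a, b]], HasDerivWithinAt x' (x'' t) [[a, b]] t)
    (hx'' : ContinuousOn x'' [[a, b]])
    (hu : ∀ t ∈ [[a, b]], HasDerivWithinAt u (u' t) [[a, b]] t)
    (hu' : ContinuousOn u' [[a, b]]) (hua : u a = 0) (hub : u b = 0) :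
    ∫ t in a..b, x'' t * u t = -∫ t in a..b, x' t * u' t := by
  simp_rw [mul_comm (x'' _), mul_comm (x' _)]
  rw [integral_mul_deriv_eq_deriv_mul_of_hasDerivWithinAt hu hx' hu'.intervalIntegrable
    hx''.intervalIntegrable, hua, hub]
  simp

theorem integral_deriv_deriv_mul_eq {α β : ℝ} {u u' : ℝ → ℝ}
    (hx : ∀ t ∈ [[a, b]], HasDerivWithinAt x (x' t) [[a, b]] t)
    (hx' : ∀ t ∈ [[a, b]], HasDerivWithinAt x' (x'' t) [[a, b]] t)
    (hx'' : ContinuousOn x'' [[a, b]]) (hxa : x a = 0) (hxb : x b = 0)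
    (hu : ∀ t ∈ [[a, b]], HasDerivWithinAt u (u' t) [[a, b]] t)
    (hu' : ContinuousOn u' [[a, b]]) (hua : u a = 0) (hub : u b = 0) :
    ∫ t in a..b, x'' t * (x'' t + α * x t - β * x t * x' t ^ 2 + u t)
      = (∫ t in a..b, x'' t ^ 2) - α * (∫ t in a..b, x' t ^ 2)
        + β / 3 * (∫ t in a..b, x' t ^ 4) - ∫ t in a..b, x' t * u' t := by
  have hxc : ContinuousOn x [[a, b]] := fun t ht => (hx t ht).continuousWithinAt
  have hx'c : ContinuousOn x' [[a, b]] := fun t ht => (hx' t ht).continuousWithinAt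
  have huc : ContinuousOn u [[a, b]] := fun t ht => (hu t ht).continuousWithinAt
  have hsplit : ∫ t in a..b, x'' t * (x'' t + α * x t - β * x t * x' t ^ 2 + u t)
      = (∫ t in a..b, x'' t ^ 2) + α * (∫ t in a..b, x t * x'' t)
        - β * (∫ t in a..b, x t * x' t ^ 2 * x'' t) + ∫ t in a..b, x'' t * u t := by
    have hpointwise : ∀ t, x'' t * (x'' t + α * x t - β * x t * x' t ^ 2 + u t)
        = x'' t ^ 2 + α * (x t * x'' t) - β * (x t * x' t ^ 2 * x'' t) + x'' t * u t :=
      fun t => by ring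
    simp_rw [hpointwise]
    rw [intervalIntegral.integral_add, intervalIntegral.integral_sub,
      intervalIntegral.integral_add, intervalIntegral.integral_const_mul,
      intervalIntegral.integral_const_mul]
    all_goals exact ContinuousOn.intervalIntegrable (by fun_prop)
  rw [hsplit, integral_mul_deriv_deriv_eq_neg hx hx' hx'' hxa hxb,
    integral_mul_sq_deriv_mul_deriv_deriv_eq_neg hx hx' hx'' hxa hxb,
    integral_deriv_deriv_mul_eq_neg hx' hx'' hu hu' hua hub]
  ring

end Interval

section ZeroPi

variable {x x' x'' : ℝ → ℝ}

theorem integral_sq_le_integral_sq_deriv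
    (hx : ∀ t ∈ [[0, π]], HasDerivWithinAt x (x' t) [[0, π]] t)
    (hx' : ContinuousOn x' [[0, π]]) (hx0 : x 0 = 0) (hxπ : x π = 0) :
    ∫ t in (0)..π, x t ^ 2 ≤ ∫ t in (0)..π, x' t ^ 2 := by
  have hbound : ∀ c ∈ Ioo (0 : ℝ) 1,
      c ^ 2 * ∫ t in (0)..π, x t ^ 2 ≤ ∫ t in (0)..π, x' t ^ 2 := by
    rintro c ⟨hc0, hc1⟩
    refine mul_integral_sq_le_integral_sq_deriv_of_riccati
      (h := fun t => c * tan (c * (t - π / 2))) pi_pos.le hx hx' (fun t ht => ?_) hx0 hxπ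
    refine (hasDerivAt_mul_tan_mul_sub c (π / 2) t
      (cos_pos_of_mem_Ioo ⟨?_, ?_⟩).ne').hasDerivWithinAt
    all_goals
      rw [uIcc_of_le pi_pos.le] at ht
      nlinarith [ht.1, ht.2, pi_pos]
  refine le_of_tendsto (f := fun c : ℝ => c ^ 2 * ∫ t in (0)..π, x t ^ 2) (x := 𝓝[<] 1) ?_ ?_
  · simpa using (((continuous_pow 2).tendsto' (1 : ℝ) 1 (one_pow 2)).mono_left
      nhdsWithin_le_nhds).mul_const (∫ t in (0)..π, x t ^ 2)
  · filter_upwards [Ioo_mem_nhdsLT (zero_lt_one' ℝ)] using hbound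

theorem integral_sq_deriv_le_integral_sq_deriv_deriv
    (hx : ∀ t ∈ [[0, π]], HasDerivWithinAt x (x' t) [[0, π]] t)
    (hx' : ∀ t ∈ [[0, π]], HasDerivWithinAt x' (x'' t) [[0, π]] t)
    (hx'' : ContinuousOn x'' [[0, π]]) (hx0 : x 0 = 0) (hxπ : x π = 0) :
    ∫ t in (0)..π, x' t ^ 2 ≤ ∫ t in (0)..π, x'' t ^ 2 := by
  have hxc : ContinuousOn x [[0, π]] := fun t ht => (hx t ht).continuousWithinAt
  have hx'c : ContinuousOn x' [[0, π]] := fun t ht => (hx' t ht).continuousWithinAt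
  have hwirtinger := integral_sq_le_integral_sq_deriv hx hx'c hx0 hxπ
  have hparts := integral_mul_deriv_deriv_eq_neg hx hx' hx'' hx0 hxπ
  have hsq : 0 ≤ ∫ t in (0)..π, (x t + x'' t) ^ 2 :=
    integral_nonneg pi_pos.le fun t _ => sq_nonneg _
  have hexpand : ∫ t in (0)..π, (x t + x'' t) ^ 2 = (∫ t in (0)..π, x t ^ 2)
      + 2 * (∫ t in (0)..π, x t * x'' t) + ∫ t in (0)..π, x'' t ^ 2 := by
    simp_rw [add_sq, mul_assoc]
    rw [intervalIntegral.integral_add, intervalIntegral.integral_add,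
      intervalIntegral.integral_const_mul]
    all_goals exact ContinuousOn.intervalIntegrable (by fun_prop)
  linarith

theorem dissipation_estimate_of_hasDerivWithinAt (a b : ℝ) (hb : 0 < b) {u u' : ℝ → ℝ}
    (hx : ∀ t ∈ [[0, π]], HasDerivWithinAt x (x' t) [[0, π]] t)
    (hx' : ∀ t ∈ [[0, π]], HasDerivWithinAt x' (x'' t) [[0, π]] t)
    (hx'' : ContinuousOn x'' [[0, π]]) (hx0 : x 0 = 0) (hxπ : x π = 0)
    (hu : ∀ t ∈ [[0, π]], HasDerivWithinAt u (u' t) [[0, π]] t)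
    (hu' : ContinuousOn u' [[0, π]]) (hu0 : u 0 = 0) (huπ : u π = 0) :
    -2 * ∫ l in (0)..π, x'' l * (x'' l + a * x l - b * x l * x' l ^ 2 + u l)
      ≤ -2 * (1 - a) * (∫ l in (0)..π, x' l ^ 2)
        - (b / (3 * π)) * (∫ l in (0)..π, x' l ^ 2) ^ 2
        + 2 * (6 / b) ^ ((1 : ℝ) / 3) * ∫ l in (0)..π, |u' l| ^ ((4 : ℝ) / 3) := by
  have hx'c : ContinuousOn x' [[0, π]] := fun t ht => (hx' t ht).continuousWithinAt
  set K := (6 / b) ^ ((1 : ℝ) / 3)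
  have hK3 : K ^ 3 = 6 / b := by
    rw [← rpow_natCast, ← rpow_mul (by positivity)]; norm_num
  have hyoung := integral_mul_le_integral_pow_four_div_add_mul_integral_rpow pi_pos.le
    (by positivity : 0 < K) hx'c hu'
  rw [hK3, div_div_eq_mul_div, mul_div_right_comm] at hyoung
  have hcs := sq_integral_le_mul_integral_sq pi_pos.le (f := fun t => x' t ^ 2) (by fun_prop)
  simp only [← pow_mul, sub_zero] at hcs
  have hquartic : b / (3 * π) * (∫ l in (0)..π, x' l ^ 2) ^ 2
      ≤ b / 3 * ∫ l in (0)..π, x' l ^ 4 := by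
    calc _ ≤ b / (3 * π) * (π * ∫ l in (0)..π, x' l ^ 4) := by gcongr
      _ = _ := by field_simp
  have hpoincare := integral_sq_deriv_le_integral_sq_deriv_deriv hx hx' hx'' hx0 hxπ
  rw [integral_deriv_deriv_mul_eq hx hx' hx'' hx0 hxπ hu hu' hu0 huπ]
  linarith

end ZeroPi

theorem eqOn_deriv_derivWithin_interior (f : ℝ → ℝ) (s : Set ℝ) :
    EqOn (deriv f) (derivWithin f s) (interior s) := fun _ ht =>
  (derivWithin_of_mem_nhds (mem_interior_iff_mem_nhds.1 ht)).symm

theorem eqOn_deriv_deriv_derivWithin_derivWithin_interior (f : ℝ → ℝ) (s : Set ℝ) :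
    EqOn (deriv (deriv f)) (derivWithin (derivWithin f s) s) (interior s) := fun t ht => by
  have hloc : deriv f =ᶠ[𝓝 t] derivWithin f s :=
    eventually_of_mem (isOpen_interior.mem_nhds ht) (eqOn_deriv_derivWithin_interior f s)
  rw [hloc.deriv_eq, eqOn_deriv_derivWithin_interior _ s ht]

/-- Alternative dissipation estimate (61) for the second subsystem of Example 1
of the paper, establishing ISS with respect to the input space
`W₀^{1,4/3}(0,π)`: the Lie derivative of `V₂(x) = ∫₀^π (x')² dl` along
`∂x/∂t = ∂²x/∂l² + a·x − b·x·(∂x/∂l)² + u` with Dirichlet boundary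
conditions. -/
theorem dissipation_estimate_61 (a b : ℝ) (hb : 0 < b)
    (x : ℝ → ℝ) (hx : ContDiffOn ℝ 2 x (Set.Icc 0 Real.pi))
    (hx0 : x 0 = 0) (hxpi : x Real.pi = 0)
    (u : ℝ → ℝ) (hu : ContDiffOn ℝ 1 u (Set.Icc 0 Real.pi))
    (hu0 : u 0 = 0) (hupi : u Real.pi = 0) :
    -2 * ∫ l in (0:ℝ)..Real.pi, deriv (deriv x) l *
        (deriv (deriv x) l + a * x l - b * x l * (deriv x l) ^ 2 + u l)
      ≤ -2 * (1 - a) * (∫ l in (0:ℝ)..Real.pi, (deriv x l) ^ 2)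
        - (b / (3 * Real.pi)) * (∫ l in (0:ℝ)..Real.pi, (deriv x l) ^ 2) ^ 2
        + 2 * (6 / b) ^ ((1:ℝ)/3) * ∫ l in (0:ℝ)..Real.pi, |deriv u l| ^ ((4:ℝ)/3) := by
  rw [← uIcc_of_le pi_pos.le] at hx hu
  have hS : UniqueDiffOn ℝ [[0, π]] := uIcc_of_le pi_pos.le ▸ uniqueDiffOn_Icc pi_pos
  set x' := derivWithin x [[0, π]]
  set x'' := derivWithin x' [[0, π]]
  set u' := derivWithin u [[0, π]]
  have hx1 : ContDiffOn ℝ 1 x' [[0, π]] := hx.derivWithin hS (by norm_num)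
  have hinterior : Ioo 0 π ⊆ interior [[0, π]] := by rw [uIcc_of_le pi_pos.le, interior_Icc]
  have hx' : EqOn (deriv x) x' (Ioo 0 π) :=
    (eqOn_deriv_derivWithin_interior x _).mono hinterior
  have hx'' : EqOn (deriv (deriv x)) x'' (Ioo 0 π) :=
    (eqOn_deriv_deriv_derivWithin_derivWithin_interior x _).mono hinterior
  have hu' : EqOn (deriv u) u' (Ioo 0 π) := (eqOn_deriv_derivWithin_interior u _).mono hinterior
  have hlhs : ∫ l in (0)..π, deriv (deriv x) l *
      (deriv (deriv x) l + a * x l - b * x l * deriv x l ^ 2 + u l)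
      = ∫ l in (0)..π, x'' l * (x'' l + a * x l - b * x l * x' l ^ 2 + u l) :=
    integral_congr_Ioo_of_le pi_pos.le fun t ht => by rw [hx'' ht, hx' ht]
  have hZ : ∫ l in (0)..π, deriv x l ^ 2 = ∫ l in (0)..π, x' l ^ 2 :=
    integral_congr_Ioo_of_le pi_pos.le fun t ht => by rw [hx' ht]
  have hU : ∫ l in (0)..π, |deriv u l| ^ ((4 : ℝ) / 3) = ∫ l in (0)..π, |u' l| ^ ((4 : ℝ) / 3) :=
    integral_congr_Ioo_of_le pi_pos.le fun t ht => by rw [hu' ht]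
  rw [hlhs, hZ, hU]
  exact dissipation_estimate_of_hasDerivWithinAt a b hb
    (fun t ht => (hx.differentiableOn (by norm_num) t ht).hasDerivWithinAt)
    (fun t ht => (hx1.differentiableOn one_ne_zero t ht).hasDerivWithinAt)
    (hx1.continuousOn_derivWithin hS le_rfl) hx0 hxpi
    (fun t ht => (hu.differentiableOn one_ne_zero t ht).hasDerivWithinAt)
    (hu.continuousOn_derivWithin hS le_rfl) hu0 hupi
end

section
/- Let x₁ : [0,π] → ℝ be twice continuously differentiable with x₁(0) = x₁(π) = 0, and let x₂ : [0,π] → ℝ be continuously differentiable with x₂(0) = x₂(π) = 0. Then ( 2∫₀^π x₁(l) · ( x₁''(l) + x₁(l)·x₂(l)⁴ ) dl ) / ( 1 + ∫₀^π x₁(l)² dl ) ≤ −2·(∫₀^π x₁(l)² dl)/(1 + ∫₀^π x₁(l)² dl) + 8·( ∫₀^π x₂'(l)² dl )². -/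
open Real MeasureTheory intervalIntegral Set Filter Topology

/-!
Integrating by parts, the numerator is `2 (-∫ x₁'² + ∫ x₁² x₂⁴)`. Wirtinger's inequality
`∫ f² ≤ ∫ f'²` for `f` vanishing at `0` and `π` comes from completing the square,
`f'² - f² = (f' - f cot)² + (f² cot)'`, where `f² cot → 0` at both endpoints because `f` and
`sin` both vanish there to first order. Integrating `±2 f f' ≤ f² + f'²` from either endpoint to
`l` and applying Wirtinger once more gives `x₂(l)² ≤ ∫ x₂'²`, hence
`∫ x₁² x₂⁴ ≤ (∫ x₂'²)² ∫ x₁²`.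
-/

structure HasContinuousDerivOn (f f' : ℝ → ℝ) (s : Set ℝ) : Prop where
  hasDerivWithinAt : ∀ t ∈ s, HasDerivWithinAt f (f' t) s t
  continuousOn_deriv : ContinuousOn f' s

namespace HasContinuousDerivOn

variable {f f' f'' : ℝ → ℝ} {s : Set ℝ} {a b : ℝ}

theorem continuousOn (hf : HasContinuousDerivOn f f' s) : ContinuousOn f s :=
  fun t ht => (hf.hasDerivWithinAt t ht).continuousWithinAt

theorem mono (hf : HasContinuousDerivOn f f' s) {s' : Set ℝ} (hs : s' ⊆ s) :
    HasContinuousDerivOn f f' s' :=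
  ⟨fun t ht => (hf.hasDerivWithinAt t (hs ht)).mono hs, hf.continuousOn_deriv.mono hs⟩

theorem hasDerivAt (hf : HasContinuousDerivOn f f' (Icc a b)) {t : ℝ} (ht : t ∈ Ioo a b) :
    HasDerivAt f (f' t) t :=
  (hf.hasDerivWithinAt t (Ioo_subset_Icc_self ht)).hasDerivAt (Icc_mem_nhds ht.1 ht.2)

theorem eqOn_deriv (hf : HasContinuousDerivOn f f' (Icc a b)) : EqOn (deriv f) f' (Ioo a b) :=
  fun _ ht => (hf.hasDerivAt ht).deriv

theorem eqOn_deriv_deriv (hf : HasContinuousDerivOn f f' (Icc a b))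
    (hf' : HasContinuousDerivOn f' f'' (Icc a b)) : EqOn (deriv (deriv f)) f'' (Ioo a b) :=
  fun t ht => by
    rw [(hf.eqOn_deriv.eventuallyEq_of_mem (Ioo_mem_nhds ht.1 ht.2)).deriv_eq,
      (hf'.hasDerivAt ht).deriv]

end HasContinuousDerivOn

theorem ContDiffOn.hasContinuousDerivOn {f : ℝ → ℝ} {s : Set ℝ} {n : WithTop ℕ∞}
    (hf : ContDiffOn ℝ n f s) (hs : UniqueDiffOn ℝ s) (hn : 1 ≤ n) :
    HasContinuousDerivOn f (derivWithin f s) s :=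
  ⟨fun t ht => (hf.differentiableOn (zero_lt_one.trans_le hn).ne' t ht).hasDerivWithinAt,
    hf.continuousOn_derivWithin hs hn⟩

theorem tendsto_div_of_hasDerivWithinAt {f g : ℝ → ℝ} {f' g' a : ℝ} {s : Set ℝ}
    (hf : HasDerivWithinAt f f' s a) (hg : HasDerivWithinAt g g' s a) (hfa : f a = 0)
    (hga : g a = 0) (hg' : g' ≠ 0) :
    Tendsto (fun t => f t / g t) (𝓝[s \ {a}] a) (𝓝 (f' / g')) := by
  refine ((hasDerivWithinAt_iff_tendsto_slope.mp hf).div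
    (hasDerivWithinAt_iff_tendsto_slope.mp hg) hg').congr' ?_
  filter_upwards [self_mem_nhdsWithin] with t ht
  have : t - a ≠ 0 := sub_ne_zero.2 ht.2
  simp only [Pi.div_apply, slope_def_field, hfa, hga, sub_zero]
  field_simp

theorem tendsto_sq_mul_cot_of_sin_eq_zero {f : ℝ → ℝ} {f' a : ℝ} {s : Set ℝ}
    (hf : HasDerivWithinAt f f' s a) (hfa : f a = 0) (hsin : sin a = 0) :
    Tendsto (fun t => f t ^ 2 * cot t) (𝓝[s \ {a}] a) (𝓝 0) := by
  have hcos : cos a ≠ 0 := fun h => by simpa [hsin, h] using sin_sq_add_cos_sq a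
  have hlim := ((hf.continuousWithinAt.mono sdiff_subset).tendsto.mul
    (tendsto_div_of_hasDerivWithinAt hf (hasDerivAt_sin a).hasDerivWithinAt hfa hsin hcos)).mul
    ((continuous_cos.tendsto a).mono_left nhdsWithin_le_nhds)
  rw [hfa, zero_mul, zero_mul] at hlim
  exact hlim.congr fun t => by rw [cot_eq_cos_div_sin]; ring

theorem hasDerivAt_sq_mul_cot {f : ℝ → ℝ} {f' t : ℝ} (hf : HasDerivAt f f' t) (ht : sin t ≠ 0) :
    HasDerivAt (fun t => f t ^ 2 * cot t) (2 * f t * f' * cot t - f t ^ 2 / sin t ^ 2) t := by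
  simp only [cot_eq_cos_div_sin]
  refine ((hf.pow 2).mul ((hasDerivAt_cos t).div (hasDerivAt_sin t) ht)).congr_deriv ?_
  simp only [Pi.div_apply, Pi.pow_apply]
  field_simp
  linear_combination (-f t ^ 2) * sin_sq_add_cos_sq t

theorem two_mul_mul_cot_sub_div_sin_sq_le {t : ℝ} (ht : sin t ≠ 0) (x y : ℝ) :
    2 * x * y * cot t - x ^ 2 / sin t ^ 2 ≤ y ^ 2 - x ^ 2 := by
  rw [cot_eq_cos_div_sin]
  have hsq : y ^ 2 - x ^ 2 - (2 * x * y * (cos t / sin t) - x ^ 2 / sin t ^ 2)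
      = (y - x * (cos t / sin t)) ^ 2 := by
    field_simp
    linear_combination (-x ^ 2) * sin_sq_add_cos_sq t
  linarith [sq_nonneg (y - x * (cos t / sin t))]

section Inequalities

variable {f f' f'' : ℝ → ℝ}

theorem continuousOn_sq_mul_cot (hf : HasContinuousDerivOn f f' (Icc 0 π)) (h0 : f 0 = 0)
    (hπ : f π = 0) : ContinuousOn (fun t => f t ^ 2 * cot t) (Icc 0 π) := by
  intro t ht
  rcases eq_endpoints_or_mem_Ioo_of_mem_Icc ht with rfl | rfl | ht
  · rw [← continuousWithinAt_sdiff_self, ContinuousWithinAt]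
    convert tendsto_sq_mul_cot_of_sin_eq_zero (hf.hasDerivWithinAt 0 ht) h0 sin_zero
    simp [h0]
  · rw [← continuousWithinAt_sdiff_self, ContinuousWithinAt]
    convert tendsto_sq_mul_cot_of_sin_eq_zero (hf.hasDerivWithinAt π ht) hπ sin_pi
    simp [hπ]
  · refine ((hf.continuousOn t (Ioo_subset_Icc_self ht)).pow 2).mul ?_
    rw [show cot = fun t => cos t / sin t from funext cot_eq_cos_div_sin]
    exact continuous_cos.continuousWithinAt.div continuous_sin.continuousWithinAt
      (sin_pos_of_pos_of_lt_pi ht.1 ht.2).ne'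

theorem integral_sq_le_integral_deriv_sq (hf : HasContinuousDerivOn f f' (Icc 0 π))
    (h0 : f 0 = 0) (hπ : f π = 0) : ∫ t in 0..π, f t ^ 2 ≤ ∫ t in 0..π, f' t ^ 2 := by
  have hsin : ∀ t ∈ Ioo 0 π, sin t ≠ 0 := fun t ht => (sin_pos_of_pos_of_lt_pi ht.1 ht.2).ne'
  have key := sub_le_integral_of_hasDeriv_right_of_le (φ := fun t => f' t ^ 2 - f t ^ 2)
    pi_pos.le (continuousOn_sq_mul_cot hf h0 hπ)
    (fun t ht => (hasDerivAt_sq_mul_cot (hf.hasDerivAt ht) (hsin t ht)).hasDerivWithinAt)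
    ((hf.continuousOn_deriv.pow 2).sub (hf.continuousOn.pow 2)).integrableOn_Icc
    (fun t ht => two_mul_mul_cot_sub_div_sin_sq_le (hsin t ht) _ _)
  rw [integral_sub (f := fun t => f' t ^ 2) (g := fun t => f t ^ 2)
    ((hf.continuousOn_deriv.pow 2).intervalIntegrable_of_Icc pi_pos.le)
    ((hf.continuousOn.pow 2).intervalIntegrable_of_Icc pi_pos.le), h0, hπ] at key
  simpa using key

theorem abs_sub_sq_le_integral_sq_add_deriv_sq {a b : ℝ} (hab : a ≤ b)
    (hf : HasContinuousDerivOn f f' (Icc a b)) :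
    |f b ^ 2 - f a ^ 2| ≤ ∫ t in a..b, (f t ^ 2 + f' t ^ 2) := by
  have hφ : IntegrableOn (fun t => f t ^ 2 + f' t ^ 2) (Icc a b) :=
    ((hf.continuousOn.pow 2).add (hf.continuousOn_deriv.pow 2)).integrableOn_Icc
  rw [abs_sub_le_iff]
  constructor
  · exact sub_le_integral_of_hasDeriv_right_of_le hab (hf.continuousOn.pow 2)
      (fun t ht => ((hf.hasDerivAt ht).pow 2).hasDerivWithinAt) hφ
      (fun t _ => by simpa using two_mul_le_add_sq (f t) (f' t))
  · have := sub_le_integral_of_hasDeriv_right_of_le hab (hf.continuousOn.pow 2).neg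
      (fun t ht => ((hf.hasDerivAt ht).pow 2).neg.hasDerivWithinAt) hφ
      (fun t _ => by simpa using two_mul_le_add_sq (-f t) (f' t))
    simp only [Pi.neg_apply, Pi.pow_apply] at this
    linarith

theorem two_mul_sq_le_integral_sq_add_deriv_sq {a b l : ℝ} (hl : l ∈ Icc a b)
    (hf : HasContinuousDerivOn f f' (Icc a b)) (ha : f a = 0) (hb : f b = 0) :
    2 * f l ^ 2 ≤ ∫ t in a..b, (f t ^ 2 + f' t ^ 2) := by
  have hφ : ContinuousOn (fun t => f t ^ 2 + f' t ^ 2) (Icc a b) :=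
    (hf.continuousOn.pow 2).add (hf.continuousOn_deriv.pow 2)
  have hleft := abs_sub_sq_le_integral_sq_add_deriv_sq hl.1 (hf.mono (Icc_subset_Icc_right hl.2))
  have hright := abs_sub_sq_le_integral_sq_add_deriv_sq hl.2 (hf.mono (Icc_subset_Icc_left hl.1))
  simp only [ha, hb, zero_pow two_ne_zero, sub_zero, zero_sub, abs_neg, abs_sq] at hleft hright
  rw [← integral_add_adjacent_intervals
    ((hφ.mono (Icc_subset_Icc_right hl.2)).intervalIntegrable_of_Icc hl.1)
    ((hφ.mono (Icc_subset_Icc_left hl.1)).intervalIntegrable_of_Icc hl.2)]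
  linarith

theorem sq_le_integral_deriv_sq {l : ℝ} (hl : l ∈ Icc 0 π)
    (hf : HasContinuousDerivOn f f' (Icc 0 π)) (h0 : f 0 = 0) (hπ : f π = 0) :
    f l ^ 2 ≤ ∫ t in 0..π, f' t ^ 2 := by
  have h := two_mul_sq_le_integral_sq_add_deriv_sq hl hf h0 hπ
  rw [integral_add (f := fun t => f t ^ 2) (g := fun t => f' t ^ 2)
    ((hf.continuousOn.pow 2).intervalIntegrable_of_Icc pi_pos.le)
    ((hf.continuousOn_deriv.pow 2).intervalIntegrable_of_Icc pi_pos.le)] at h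
  linarith [integral_sq_le_integral_deriv_sq hf h0 hπ]

theorem integral_mul_deriv_deriv_eq_neg_integral_deriv_sq {a b : ℝ} (hab : a ≤ b)
    (hf : HasContinuousDerivOn f f' (Icc a b)) (hf' : HasContinuousDerivOn f' f'' (Icc a b))
    (ha : f a = 0) (hb : f b = 0) : ∫ t in a..b, f t * f'' t = -∫ t in a..b, f' t ^ 2 := by
  rw [← uIcc_of_le hab] at hf hf'
  rw [integral_mul_deriv_eq_deriv_mul_of_hasDerivWithinAt hf.hasDerivWithinAt hf'.hasDerivWithinAt
    hf.continuousOn_deriv.intervalIntegrable hf'.continuousOn_deriv.intervalIntegrable, ha, hb]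
  simp [sq]

theorem integral_mul_deriv_deriv_add_mul_le {V : ℝ → ℝ} {C : ℝ}
    (hf : HasContinuousDerivOn f f' (Icc 0 π)) (hf' : HasContinuousDerivOn f' f'' (Icc 0 π))
    (h0 : f 0 = 0) (hπ : f π = 0) (hV : ContinuousOn V (Icc 0 π))
    (hVC : ∀ t ∈ Icc 0 π, V t ≤ C) :
    ∫ t in 0..π, f t * (f'' t + f t * V t) ≤ (C - 1) * ∫ t in 0..π, f t ^ 2 := by
  have hx := hf.continuousOn
  have hpot : ∫ t in 0..π, f t ^ 2 * V t ≤ C * ∫ t in 0..π, f t ^ 2 := by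
    rw [← intervalIntegral.integral_const_mul]
    refine integral_mono_on pi_pos.le (((hx.pow 2).mul hV).intervalIntegrable_of_Icc pi_pos.le)
      ((continuousOn_const.mul (hx.pow 2)).intervalIntegrable_of_Icc pi_pos.le) fun t ht => ?_
    rw [mul_comm C]
    exact mul_le_mul_of_nonneg_left (hVC t ht) (sq_nonneg _)
  calc ∫ t in 0..π, f t * (f'' t + f t * V t)
      = (∫ t in 0..π, f t * f'' t) + ∫ t in 0..π, f t ^ 2 * V t := by
        rw [← integral_add (f := fun t => f t * f'' t) (g := fun t => f t ^ 2 * V t)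
          ((hx.mul hf'.continuousOn_deriv).intervalIntegrable_of_Icc pi_pos.le)
          (((hx.pow 2).mul hV).intervalIntegrable_of_Icc pi_pos.le)]
        exact integral_congr fun t _ => by ring
    _ ≤ (C - 1) * ∫ t in 0..π, f t ^ 2 := by
        rw [integral_mul_deriv_deriv_eq_neg_integral_deriv_sq pi_pos.le hf hf' h0 hπ]
        linarith [integral_sq_le_integral_deriv_sq hf h0 hπ]

end Inequalities

/-- Dissipation estimate (54) for the first subsystem of Example 1 of the
paper: the Lie derivative of the iISS Lyapunov function
`V₁(x₁) = ln(1 + ∫₀^π x₁² dl)` along `∂x₁/∂t = ∂²x₁/∂l² + x₁·x₂⁴` with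
Dirichlet boundary conditions. -/
theorem dissipation_estimate_54 (x₁ : ℝ → ℝ)
    (hx₁ : ContDiffOn ℝ 2 x₁ (Set.Icc 0 Real.pi))
    (hx₁0 : x₁ 0 = 0) (hx₁pi : x₁ Real.pi = 0)
    (x₂ : ℝ → ℝ) (hx₂ : ContDiffOn ℝ 1 x₂ (Set.Icc 0 Real.pi))
    (hx₂0 : x₂ 0 = 0) (hx₂pi : x₂ Real.pi = 0) :
    (2 * ∫ l in (0:ℝ)..Real.pi, x₁ l * (deriv (deriv x₁) l + x₁ l * (x₂ l) ^ 4)) /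
        (1 + ∫ l in (0:ℝ)..Real.pi, (x₁ l) ^ 2)
      ≤ -2 * (∫ l in (0:ℝ)..Real.pi, (x₁ l) ^ 2) /
            (1 + ∫ l in (0:ℝ)..Real.pi, (x₁ l) ^ 2)
        + 8 * (∫ l in (0:ℝ)..Real.pi, (deriv x₂ l) ^ 2) ^ 2 := by
  have hI : UniqueDiffOn ℝ (Icc 0 π) := uniqueDiffOn_Icc pi_pos
  have h₁ := hx₁.hasContinuousDerivOn hI one_le_two
  have h₁' := (hx₁.derivWithin hI (m := 1) le_rfl).hasContinuousDerivOn hI le_rfl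
  have h₂ := hx₂.hasContinuousDerivOn hI le_rfl
  set x₁'' := derivWithin (derivWithin x₁ (Icc 0 π)) (Icc 0 π)
  set x₂' := derivWithin x₂ (Icc 0 π)
  have e₁ : ∫ l in (0:ℝ)..π, x₁ l * (deriv (deriv x₁) l + x₁ l * x₂ l ^ 4) =
      ∫ l in (0:ℝ)..π, x₁ l * (x₁'' l + x₁ l * x₂ l ^ 4) :=
    integral_congr_Ioo_of_le pi_pos.le fun l hl => by simp only [h₁.eqOn_deriv_deriv h₁' hl]
  have e₂ : ∫ l in (0:ℝ)..π, deriv x₂ l ^ 2 = ∫ l in (0:ℝ)..π, x₂' l ^ 2 :=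
    integral_congr_Ioo_of_le pi_pos.le fun l hl => by simp only [h₂.eqOn_deriv hl]
  rw [e₁, e₂]
  set A := ∫ l in (0:ℝ)..π, x₁ l ^ 2
  set B := ∫ l in (0:ℝ)..π, x₂' l ^ 2
  have hA : 0 ≤ A := integral_nonneg pi_pos.le fun _ _ => sq_nonneg _
  have hN := integral_mul_deriv_deriv_add_mul_le (V := fun l => x₂ l ^ 4) (C := B ^ 2)
    h₁ h₁' hx₁0 hx₁pi (hx₂.continuousOn.pow 4) fun l hl => by
      rw [show x₂ l ^ 4 = (x₂ l ^ 2) ^ 2 by ring]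
      exact pow_le_pow_left₀ (sq_nonneg _) (sq_le_integral_deriv_sq hl h₂ hx₂0 hx₂pi) 2
  rw [div_add' _ _ _ (by positivity), div_le_div_iff_of_pos_right (by positivity)]
  nlinarith [hN, mul_nonneg (sq_nonneg B) hA]
end

section
/- For every real number c with 1 < c ≤ 2 there exists ψ > 0 such that ψ^{−ψ/(ψ+1)} < c/(ψ+1) and c/(ψ+1) ≤ 1. -/
open Real Filter Topology

/-!
Since `ψ ^ (-(ψ / (ψ + 1))) * (ψ + 1) = (1 + 1 / ψ) * ψ ^ (1 / (ψ + 1))` tends to `1` as `ψ → ∞`,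
it drops below any `c > 1` for large `ψ`; taking moreover `ψ ≥ 1` gives `c / (ψ + 1) ≤ c / 2 ≤ 1`.
-/

lemma rpow_neg_div_add_one_mul_add_one {x : ℝ} (hx : 0 < x) :
    x ^ (-(x / (x + 1))) * (x + 1) = (1 + 1 / x) * x ^ (1 / (x + 1)) := by
  have hexp : -(x / (x + 1)) = 1 / (x + 1) - 1 := by field_simp; ring
  rw [hexp, rpow_sub hx, rpow_one]
  field_simp

lemma tendsto_rpow_neg_div_add_one_mul_add_one :
    Tendsto (fun x : ℝ => x ^ (-(x / (x + 1))) * (x + 1)) atTop (𝓝 1) := by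
  have hlim : Tendsto (fun x : ℝ => (1 + 1 / x) * x ^ (1 / (x + 1))) atTop (𝓝 ((1 + 0) * 1)) :=
    (tendsto_const_nhds.add (tendsto_const_nhds.div_atTop tendsto_id)).mul
      (by simpa using tendsto_rpow_div_mul_add 1 1 1 zero_ne_one)
  rw [add_zero, one_mul] at hlim
  refine hlim.congr' ?_
  filter_upwards [eventually_gt_atTop 0] with x hx
  exact (rpow_neg_div_add_one_mul_add_one hx).symm

/-- The claim after Theorem 6.1 of the paper: for every `c` with `1 < c ≤ 2`
there exists `ψ > 0` satisfying `ψ^{−ψ/(ψ+1)} < c/(ψ+1) ≤ 1`. -/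
theorem exists_psi (c : ℝ) (hc1 : 1 < c) (hc2 : c ≤ 2) :
    ∃ ψ : ℝ, 0 < ψ ∧ ψ ^ (-(ψ / (ψ + 1))) < c / (ψ + 1) ∧ c / (ψ + 1) ≤ 1 := by
  obtain ⟨ψ, hψ1, hψc⟩ := ((eventually_ge_atTop (1 : ℝ)).and
    (tendsto_rpow_neg_div_add_one_mul_add_one.eventually_lt_const hc1)).exists
  have hψ : 0 < ψ + 1 := by linarith
  exact ⟨ψ, by linarith, (lt_div_iff₀ hψ).2 hψc, (div_le_one hψ).2 (by linarith)⟩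
end
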